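/- Let k be a field, A a commutative k-algebra, and n ≥ 1. If χ is an invertible n × n matrix over A ⊗[k] A with det(χ) = 1 satisfying the cocycle condition ∂₂(χ) = ∂₁(χ) · ∂₃(χ) (the ring homomorphisms ∂ᵢ being applied entrywise), then there exists an invertible n × n matrix α over A with det(α) = 1 such that χ = δ₁(α) · δ₂(α)⁻¹. (This expresses that the Amitsur cohomology set H¹(A/k, SLₙ) is trivial for every algebra A over a field k.) -/

import Mathlib

open TensorProduct

/-- `δ₁ : A → A ⊗[k] A`, `a ↦ 1 ⊗ a`. -/
noncomputable def amitsurD1 (k A : Type*) [CommRing k] [CommRing A] [Algebra k A] :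
    A →ₐ[k] A ⊗[k] A :=
  Algebra.TensorProduct.includeRight

/-- `δ₂ : A → A ⊗[k] A`, `a ↦ a ⊗ 1`. -/
noncomputable def amitsurD2 (k A : Type*) [CommRing k] [CommRing A] [Algebra k A] :
    A →ₐ[k] A ⊗[k] A :=
  Algebra.TensorProduct.includeLeft

/-- `∂₁ : A ⊗[k] A → A ⊗[k] A ⊗[k] A`, `a ⊗ b ↦ 1 ⊗ a ⊗ b`. -/
noncomputable def amitsurP1 (k A : Type*) [CommRing k] [CommRing A] [Algebra k A] :
    A ⊗[k] A →ₐ[k] A ⊗[k] (A ⊗[k] A) :=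
  Algebra.TensorProduct.includeRight

/-- `∂₂ : A ⊗[k] A → A ⊗[k] A ⊗[k] A`, `a ⊗ b ↦ a ⊗ 1 ⊗ b`. -/
noncomputable def amitsurP2 (k A : Type*) [CommRing k] [CommRing A] [Algebra k A] :
    A ⊗[k] A →ₐ[k] A ⊗[k] (A ⊗[k] A) :=
  Algebra.TensorProduct.map (AlgHom.id k A) Algebra.TensorProduct.includeRight

/-- `∂₃ : A ⊗[k] A → A ⊗[k] A ⊗[k] A`, `a ⊗ b ↦ a ⊗ b ⊗ 1`. -/
noncomputable def amitsurP3 (k A : Type*) [CommRing k] [CommRing A] [Algebra k A] :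
    A ⊗[k] A →ₐ[k] A ⊗[k] (A ⊗[k] A) :=
  Algebra.TensorProduct.map (AlgHom.id k A) Algebra.TensorProduct.includeLeft

/-!
Let `V = {v ∈ Aⁿ | δ₁ v = χ · δ₂ v}`, a `k`-subspace of `Aⁿ`. Slicing by a functional `f` on the
last factor turns the cocycle identity `∂₂ χ⁻¹ = ∂₃ χ⁻¹ · ∂₁ χ⁻¹` into the statement that the
columns of `(id ⊗ f)(χ⁻¹)` lie in `V`; multiplying out the tensor factors of `χ⁻¹` then shows that
`V` spans `Aⁿ` over `A`. Slicing a relation `∑ gᵢ vᵢ = 0` the same way shows that `k`-independent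
vectors of `V` remain `A`-independent. Hence a `k`-basis of `V` is an `A`-basis of `Aⁿ`, whose
matrix `β` satisfies `δ₁ β = χ · δ₂ β`. As `det χ = 1`, `det β` is equalized by `δ₁` and `δ₂`, so
it is a nonzero scalar `c ∈ k`, and dividing one column of `β` by `c` gives `α`.
-/

namespace Amitsur

open Matrix

section CommRing

variable {k A : Type*} [CommRing k] [CommRing A] [Algebra k A]

noncomputable def rightSlice (f : Module.Dual k A) : A ⊗[k] A →ₗ[k] A :=
  TensorProduct.rid k A ∘ₗ f.lTensor A

@[simp]
lemma rightSlice_tmul (f : Module.Dual k A) (a b : A) : rightSlice f (a ⊗ₜ b) = f b • a := by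
  simp [rightSlice]

lemma rightSlice_amitsurD1_mul_amitsurD2 (f : Module.Dual k A) (a b : A) :
    rightSlice f (amitsurD1 k A a * amitsurD2 k A b) = f a • b := by
  simp [amitsurD1, amitsurD2]

lemma rightSlice_amitsurD1 (f : Module.Dual k A) (a : A) :
    rightSlice f (amitsurD1 k A a) = f a • 1 := by
  simp [amitsurD1]

lemma rightSlice_amitsurD2 (f : Module.Dual k A) (a : A) :
    rightSlice f (amitsurD2 k A a) = f 1 • a := by
  simp [amitsurD2]

lemma lTensor_rightSlice_amitsurP2 (f : Module.Dual k A) (x : A ⊗[k] A) :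
    (rightSlice f).lTensor A (amitsurP2 k A x) = amitsurD2 k A (rightSlice f x) := by
  induction x with
  | zero => simp
  | tmul a b => simp [amitsurP2, amitsurD2, smul_tmul']
  | add x y hx hy => simp only [map_add, hx, hy]

lemma lTensor_rightSlice_amitsurP3_mul_amitsurP1 (f : Module.Dual k A) (x y : A ⊗[k] A) :
    (rightSlice f).lTensor A (amitsurP3 k A x * amitsurP1 k A y) =
      x * amitsurD1 k A (rightSlice f y) := by
  induction x with
  | zero => simp
  | add x x' hx hx' => simp only [map_add, add_mul, hx, hx']
  | tmul a b =>
    induction y with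
    | zero => simp
    | add y y' hy hy' => simp only [map_add, mul_add, hy, hy']
    | tmul c d => simp [amitsurP1, amitsurP3, amitsurD1]

lemma lmul'_eq_sum_mul_rightSlice {κ : Type*} [DecidableEq κ] (b : Module.Basis κ k A)
    (x : A ⊗[k] A) {S : Finset κ} (hS : (TensorProduct.equivFinsuppOfBasisRight b x).support ⊆ S) :
    Algebra.TensorProduct.lmul' k x = ∑ l ∈ S, b l * rightSlice (b.coord l) x := by
  conv_lhs => rw [← (TensorProduct.equivFinsuppOfBasisRight b).symm_apply_apply x]
  rw [TensorProduct.equivFinsuppOfBasisRight_symm_apply, Finsupp.sum_of_support_subset _ hS]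
  · simp [map_sum, TensorProduct.equivFinsuppOfBasisRight_apply, rightSlice, mul_comm]
  · simp

variable {n : Type*} [Fintype n]

def IsCocycle (χ : Matrix n n (A ⊗[k] A)) : Prop :=
  χ.map (amitsurP2 k A) = χ.map (amitsurP1 k A) * χ.map (amitsurP3 k A)

noncomputable def descentSubspace (χ : Matrix n n (A ⊗[k] A)) : Submodule k (n → A) :=
  LinearMap.eqLocus ((amitsurD1 k A).toLinearMap.compLeft n)
    ((χ.mulVecLin.restrictScalars k) ∘ₗ (amitsurD2 k A).toLinearMap.compLeft n)

lemma mem_descentSubspace {χ : Matrix n n (A ⊗[k] A)} {v : n → A} :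
    v ∈ descentSubspace χ ↔ amitsurD1 k A ∘ v = χ *ᵥ (amitsurD2 k A ∘ v) :=
  Iff.rfl

lemma map_amitsurD1_eq_mul_iff {χ : Matrix n n (A ⊗[k] A)} {β : Matrix n n A} :
    β.map (amitsurD1 k A) = χ * β.map (amitsurD2 k A) ↔ ∀ j, β.col j ∈ descentSubspace χ := by
  simp only [← Matrix.ext_iff, mem_descentSubspace, funext_iff]
  exact forall_comm

lemma map_amitsurD1_mul_map_algebraMap {χ : Matrix n n (A ⊗[k] A)} {β : Matrix n n A}
    (h : β.map (amitsurD1 k A) = χ * β.map (amitsurD2 k A)) (M : Matrix n n k) :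
    (β * M.map (algebraMap k A)).map (amitsurD1 k A) =
      χ * (β * M.map (algebraMap k A)).map (amitsurD2 k A) := by
  have hM (φ : A →ₐ[k] A ⊗[k] A) :
      (M.map (algebraMap k A)).map φ = M.map (algebraMap k (A ⊗[k] A)) := by
    ext; simp
  rw [Matrix.map_mul, Matrix.map_mul, hM, hM, h, Matrix.mul_assoc]

variable [DecidableEq n] {χ : (Matrix n n (A ⊗[k] A))ˣ}

lemma IsCocycle.map_amitsurP2_inv (hχ : IsCocycle χ.val) :
    χ⁻¹.val.map (amitsurP2 k A) = χ⁻¹.val.map (amitsurP3 k A) * χ⁻¹.val.map (amitsurP1 k A) := by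
  let F (φ : A ⊗[k] A →ₐ[k] A ⊗[k] (A ⊗[k] A)) := Units.map φ.toRingHom.mapMatrix.toMonoidHom χ
  have hF (φ : A ⊗[k] A →ₐ[k] A ⊗[k] (A ⊗[k] A)) : χ⁻¹.val.map φ = ↑(F φ)⁻¹ := by
    rw [← map_inv]; rfl
  have hFχ : F (amitsurP2 k A) = F (amitsurP1 k A) * F (amitsurP3 k A) := Units.ext hχ
  rw [hF, hF, hF, hFχ, _root_.mul_inv_rev, Units.val_mul]

lemma map_rightSlice_inv_map_amitsurD1 (hχ : IsCocycle χ.val) (f : Module.Dual k A) :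
    (χ⁻¹.val.map (rightSlice f)).map (amitsurD1 k A) =
      χ * (χ⁻¹.val.map (rightSlice f)).map (amitsurD2 k A) := by
  suffices h : (χ⁻¹.val.map (rightSlice f)).map (amitsurD2 k A) =
      χ⁻¹.val * (χ⁻¹.val.map (rightSlice f)).map (amitsurD1 k A) by
    rw [h, ← Matrix.mul_assoc, Units.mul_inv, Matrix.one_mul]
  ext i j
  have := congrArg ((rightSlice f).lTensor A) (congrFun₂ hχ.map_amitsurP2_inv i j)
  simpa [Matrix.mul_apply, map_sum, lTensor_rightSlice_amitsurP2,
    lTensor_rightSlice_amitsurP3_mul_amitsurP1] using this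

end CommRing

section Field

variable {k A : Type*} [Field k] [CommRing A] [Algebra k A]

lemma exists_eq_algebraMap_of_amitsurD1_eq_amitsurD2 [Nontrivial A] {a : A}
    (h : amitsurD1 k A a = amitsurD2 k A a) : ∃ c : k, a = algebraMap k A c := by
  obtain ⟨f, hf⟩ := Module.Projective.exists_dual_eq_one k (one_ne_zero : (1 : A) ≠ 0)
  refine ⟨f a, ?_⟩
  have := congrArg (rightSlice f) h
  rwa [rightSlice_amitsurD1, rightSlice_amitsurD2, hf, one_smul, ← Algebra.algebraMap_eq_smul_one,
    eq_comm] at this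

variable {n : Type*} [Fintype n] [DecidableEq n]

lemma linearIndependent_of_mem_descentSubspace (χ : (Matrix n n (A ⊗[k] A))ˣ) {ι : Type*}
    {v : ι → n → A} (hv : ∀ i, v i ∈ descentSubspace χ.val)
    (hli : LinearIndependent k v) : LinearIndependent A v := by
  rw [linearIndependent_iff'] at hli ⊢
  intro s g hg j hj
  -- `Y = ∑ᵢ vᵢ ⊗ gᵢ`, read in `(A ⊗[k] A)ⁿ`
  set Y : n → A ⊗[k] A := ∑ i ∈ s, amitsurD1 k A (g i) • (amitsurD2 k A ∘ v i)
  have hχY : χ.val *ᵥ Y = 0 :=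
    calc χ.val *ᵥ Y
      _ = ∑ i ∈ s, amitsurD1 k A (g i) • (amitsurD1 k A ∘ v i) := by
        simp only [Y, Matrix.mulVec_sum, Matrix.mulVec_smul, ← mem_descentSubspace.1 (hv _)]
      _ = amitsurD1 k A ∘ ∑ i ∈ s, g i • v i := by
        ext p; simp [Finset.sum_apply, map_sum]
      _ = 0 := by rw [hg]; ext; simp
  have hY : Y = 0 := mulVec_injective_of_isUnit χ.isUnit (hχY.trans (mulVec_zero _).symm)
  have hslice (f : Module.Dual k A) : ∑ i ∈ s, f (g i) • v i = 0 := by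
    ext p
    simpa [Y, Finset.sum_apply, map_sum, rightSlice_amitsurD1_mul_amitsurD2] using
      congrArg (fun y => rightSlice f (y p)) hY
  exact (Module.forall_dual_apply_eq_zero_iff k (g j)).1 fun f => hli s _ (hslice f) j hj

variable {χ : (Matrix n n (A ⊗[k] A))ˣ}

lemma col_map_lmul'_inv_mem_span (hχ : IsCocycle χ.val) (j : n) :
    (χ⁻¹.val.map (Algebra.TensorProduct.lmul' k)).col j ∈
      Submodule.span A (descentSubspace χ.val : Set (n → A)) := by
  classical
  let b := Module.Basis.ofVectorSpace k A
  let supp (i : n) := (TensorProduct.equivFinsuppOfBasisRight b (χ⁻¹.val i j)).support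
  let S := Finset.univ.biUnion supp
  have hS (i : n) : supp i ⊆ S := Finset.subset_biUnion_of_mem supp (Finset.mem_univ i)
  have hcol : (χ⁻¹.val.map (Algebra.TensorProduct.lmul' k)).col j =
      ∑ l ∈ S, b l • (χ⁻¹.val.map (rightSlice (b.coord l))).col j := by
    ext i
    rw [Matrix.col_apply, Matrix.map_apply, lmul'_eq_sum_mul_rightSlice b _ (hS i)]
    simp [Finset.sum_apply]
  rw [hcol]
  refine Submodule.sum_mem _ fun l _ => Submodule.smul_mem _ _ (Submodule.subset_span ?_)
  exact map_amitsurD1_eq_mul_iff.1 (map_rightSlice_inv_map_amitsurD1 hχ _) j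

theorem span_descentSubspace_eq_top (hχ : IsCocycle χ.val) :
    Submodule.span A (descentSubspace χ.val : Set (n → A)) = ⊤ := by
  refine Submodule.eq_top_iff'.2 fun w => ?_
  let μ := (Algebra.TensorProduct.lmul' k (S := A)).toRingHom.mapMatrix (m := n)
  have hw : w = (μ χ⁻¹.val) *ᵥ ((μ χ.val) *ᵥ w) := by
    rw [Matrix.mulVec_mulVec, ← map_mul, Units.inv_mul, map_one, Matrix.one_mulVec]
  have hrange : w ∈ LinearMap.range (μ χ⁻¹.val).mulVecLin := ⟨_, hw.symm⟩
  rw [Matrix.range_mulVecLin] at hrange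
  refine Submodule.span_le.2 ?_ hrange
  rintro _ ⟨j, rfl⟩
  exact col_map_lmul'_inv_mem_span hχ j

theorem exists_isUnit_det_map_amitsurD1_eq_mul [Nontrivial A] (hχ : IsCocycle χ.val) :
    ∃ β : Matrix n n A, IsUnit β.det ∧ β.map (amitsurD1 k A) = χ * β.map (amitsurD2 k A) := by
  obtain ⟨s, hsV, hspan_k, hli_k⟩ :=
    exists_linearIndependent k (descentSubspace χ.val : Set (n → A))
  have hli : LinearIndependent A ((↑) : s → n → A) :=
    linearIndependent_of_mem_descentSubspace χ (fun v => hsV v.2) hli_k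
  have hspan : ⊤ ≤ Submodule.span A (Set.range ((↑) : s → n → A)) := by
    rw [← span_descentSubspace_eq_top hχ, Subtype.range_coe, Submodule.span_le]
    intro v hv
    rw [← Submodule.span_eq (descentSubspace χ.val), ← hspan_k] at hv
    exact Submodule.span_le_restrictScalars k A s hv
  let bA := Module.Basis.mk hli hspan
  let bA' := bA.reindex (bA.indexEquiv (Pi.basisFun A n))
  have := (Pi.basisFun A n).invertibleToMatrix bA'
  refine ⟨(Pi.basisFun A n).toMatrix bA', Matrix.isUnit_det_of_invertible _,
    map_amitsurD1_eq_mul_iff.2 fun j => ?_⟩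
  have hcol : ((Pi.basisFun A n).toMatrix bA').col j = bA' j := by
    ext i; simp [Module.Basis.toMatrix_apply]
  rw [hcol, Module.Basis.reindex_apply, Module.Basis.mk_apply]
  exact hsV (Subtype.coe_prop _)

theorem exists_det_eq_one_map_amitsurD1_eq_mul [Nonempty n] (hdet : χ.val.det = 1)
    (hχ : IsCocycle χ.val) :
    ∃ α : Matrix n n A, α.det = 1 ∧ α.map (amitsurD1 k A) = χ * α.map (amitsurD2 k A) := by
  rcases subsingleton_or_nontrivial A with hA | hA
  · have : Subsingleton (A ⊗[k] A) := Module.subsingleton A _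
    exact ⟨1, Subsingleton.elim _ _, Subsingleton.elim _ _⟩
  obtain ⟨β, hβ, hβχ⟩ := exists_isUnit_det_map_amitsurD1_eq_mul hχ
  have hdetβ : amitsurD1 k A β.det = amitsurD2 k A β.det := by
    rw [AlgHom.map_det, AlgHom.map_det, AlgHom.mapMatrix_apply, AlgHom.mapMatrix_apply, hβχ,
      Matrix.det_mul, hdet, one_mul]
  obtain ⟨c, hc⟩ := exists_eq_algebraMap_of_amitsurD1_eq_amitsurD2 hdetβ
  have hc0 : c ≠ 0 := by
    rintro rfl
    rw [hc, map_zero] at hβ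
    exact not_isUnit_zero hβ
  let M : Matrix n n k := Matrix.diagonal (Function.update 1 (Classical.arbitrary n) c⁻¹)
  refine ⟨β * M.map (algebraMap k A), ?_, map_amitsurD1_mul_map_algebraMap hβχ M⟩
  have hM : M.det = c⁻¹ := by
    simp [M, Matrix.det_diagonal, Finset.prod_update_of_mem]
  rw [Matrix.det_mul, ← RingHom.mapMatrix_apply, ← RingHom.map_det, hM, hc, ← map_mul,
    mul_inv_cancel₀ hc0, map_one]

end Field

end Amitsur

/-- `H¹(A/k, SLₙ)` is trivial for every algebra `A` over a field `k`:
every matrix 1-cocycle `χ ∈ SLₙ(A ⊗[k] A)` is of the form `δ₁(α)·δ₂(α)⁻¹`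
with `det α = 1`. -/
theorem amitsur_h1_SLn_trivial (k A : Type*) [Field k] [CommRing A] [Algebra k A]
    (n : ℕ) (hn : 1 ≤ n)
    (χ : (Matrix (Fin n) (Fin n) (A ⊗[k] A))ˣ)
    (hdet : χ.val.det = 1)
    (hcoc : χ.val.map (amitsurP2 k A) =
      χ.val.map (amitsurP1 k A) * χ.val.map (amitsurP3 k A)) :
    ∃ α : (Matrix (Fin n) (Fin n) A)ˣ,
      α.val.det = 1 ∧
      χ = Units.map ((amitsurD1 k A).toRingHom.mapMatrix.toMonoidHom) α *
          (Units.map ((amitsurD2 k A).toRingHom.mapMatrix.toMonoidHom) α)⁻¹ := by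
  have : Nonempty (Fin n) := ⟨⟨0, hn⟩⟩
  obtain ⟨α, hdetα, hα⟩ := Amitsur.exists_det_eq_one_map_amitsurD1_eq_mul hdet hcoc
  refine ⟨Matrix.nonsingInvUnit α (hdetα ▸ isUnit_one), hdetα, ?_⟩
  rw [eq_mul_inv_iff_mul_eq]
  exact Units.ext hα.symm
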